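/- arXiv:2408.05046 — 2 statements merged into one kernel-verified Lean document; each statement's English description precedes it below -/
import Mathlib

section
/- Let Z be a non-degenerate multimatroid with a total order ≺ on its skew classes, B a basis, and ω an active skew class with respect to B. Let {B_ω, b} be a skew pair with b ≠ B̲_ω, and set B' = B △ {B_ω, b}. Then B' is a basis of Z, the fundamental circuit C(B', ω) exists and equals C(B, ω), the active skew classes with respect to B' coincide with those with respect to B, and B̲'_{ω'} = B̲_{ω'} for every skew class ω' active with respect to B. -/
open Finset

variable {U ι : Type}

section Defs
variable [DecidableEq U] [Fintype U] [DecidableEq ι] [Fintype ι]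

/-- `S` is a subtransversal: it meets each skew class at most once.
Skew classes are the fibers of `cls : U → ι`. -/
def Subtransversal (cls : U → ι) (S : Finset U) : Prop :=
  Set.InjOn cls ↑S

/-- The skew class with index `i`, as a finset. -/
def skewClass (cls : U → ι) (i : ι) : Finset U :=
  Finset.univ.filter (fun x => cls x = i)

/-- `T` is a transversal: it meets each skew class exactly once. -/
def Transversal (cls : U → ι) (T : Finset U) : Prop :=
  Subtransversal cls T ∧ ∀ i : ι, ∃ x ∈ T, cls x = i

/-- The multimatroid rank axioms for a rank function `r` on the carrier given by
`cls : U → ι` (whose fibers, assumed nonempty, are the skew classes).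
The first three fields express axiom (R1) (each transversal carries a matroid),
and `axiomR2` is axiom (R2). -/
structure IsMultimatroid (cls : U → ι) (r : Finset U → ℕ) : Prop where
  cls_surj : Function.Surjective cls
  rank_le_card : ∀ S, Subtransversal cls S → r S ≤ S.card
  mono : ∀ S T, Subtransversal cls T → S ⊆ T → r S ≤ r T
  submod : ∀ S T, Subtransversal cls (S ∪ T) → r (S ∪ T) + r (S ∩ T) ≤ r S + r T
  axiomR2 : ∀ S, ∀ x y : U, Subtransversal cls S → cls x = cls y → x ≠ y →
    (∀ u ∈ S, cls u ≠ cls x) →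
    2 * r S + 1 ≤ r (insert x S) + r (insert y S)

/-- An independent set of the multimatroid. -/
def Indep (cls : U → ι) (r : Finset U → ℕ) (S : Finset U) : Prop :=
  Subtransversal cls S ∧ r S = S.card

/-- A basis: a maximal independent subtransversal. -/
def MMBasis (cls : U → ι) (r : Finset U → ℕ) (B : Finset U) : Prop :=
  Indep cls r B ∧ ∀ S, Indep cls r S → B ⊆ S → S = B

/-- A circuit: a minimal dependent subtransversal. -/
def Circuit (cls : U → ι) (r : Finset U → ℕ) (C : Finset U) : Prop :=
  Subtransversal cls C ∧ r C < C.card ∧ ∀ D ⊂ C, ¬ r D < D.card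

/-- Non-degenerate: every skew class has at least two elements. -/
def Nondegenerate (cls : U → ι) : Prop :=
  ∀ i : ι, 2 ≤ (skewClass cls i).card

/-- An element is singular if its singleton has rank `0`. -/
def Singular (r : Finset U → ℕ) (e : U) : Prop := r {e} = 0

end Defs

section Order
variable [DecidableEq U] [Fintype U] [DecidableEq ι] [Fintype ι] [LinearOrder ι]

/-- The skew class `i` is active with respect to the transversal `T` (in
particular, with respect to a basis): there is a circuit `C` with
`C − ω_i ⊆ T` whose `≺`-least element lies in the class `i`. -/
def Active (cls : U → ι) (r : Finset U → ℕ) (T : Finset U) (i : ι) : Prop :=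
  ∃ C, Circuit cls r C ∧ C \ skewClass cls i ⊆ T ∧
    ∃ m ∈ C, cls m = i ∧ ∀ x ∈ C, i ≤ cls x

end Order

section Aux
set_option linter.unusedSectionVars false
set_option linter.unusedVariables false
variable [DecidableEq U] [Fintype U] [DecidableEq ι] [Fintype ι]
variable {cls : U → ι} {r : Finset U → ℕ}

lemma mem_skewClass {x : U} {i : ι} : x ∈ skewClass cls i ↔ cls x = i := by
  simp [skewClass]

lemma subtr_mono {S T : Finset U} (h : T ⊆ S) (hS : Subtransversal cls S) :
    Subtransversal cls T := hS.mono (by exact_mod_cast h)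

lemma subtr_insert {S : Finset U} {x : U} (hS : Subtransversal cls S)
    (h : ∀ u ∈ S, cls u ≠ cls x) : Subtransversal cls (insert x S) := by
  intro a ha b hb hab
  simp only [coe_insert, Set.mem_insert_iff, mem_coe] at ha hb
  rcases ha with rfl | ha <;> rcases hb with rfl | hb
  · rfl
  · exact absurd hab.symm (h b hb)
  · exact absurd hab (h a ha)
  · exact hS ha hb hab

lemma indep_subset (hM : IsMultimatroid cls r) {S T : Finset U}
    (hT : Indep cls r T) (hST : S ⊆ T) : Indep cls r S := by
  have hSst : Subtransversal cls S := subtr_mono hST hT.1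
  refine ⟨hSst, le_antisymm (hM.rank_le_card S hSst) ?_⟩
  have hu : S ∪ (T \ S) = T := Finset.union_sdiff_of_subset hST
  have hsub := hM.submod S (T \ S) (by rw [hu]; exact hT.1)
  rw [hu] at hsub
  have h2 : r (T \ S) ≤ (T \ S).card :=
    hM.rank_le_card _ (subtr_mono (sdiff_subset) hT.1)
  have h3 : (T \ S).card = T.card - S.card := Finset.card_sdiff_of_subset hST
  have h4 := Finset.card_le_card hST
  have h5 := hT.2
  omega

lemma circuit_nonempty {C : Finset U} (hC : Circuit cls r C) : 0 < C.card :=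
  lt_of_le_of_lt (Nat.zero_le _) hC.2.1

lemma circuit_erase_rank (hM : IsMultimatroid cls r) {C : Finset U}
    (hC : Circuit cls r C) {x : U} (hx : x ∈ C) : r (C.erase x) = C.card - 1 := by
  have hss : C.erase x ⊂ C := Finset.erase_ssubset hx
  have h1 := hC.2.2 _ hss
  have h2 : r (C.erase x) ≤ (C.erase x).card :=
    hM.rank_le_card _ (subtr_mono (erase_subset _ _) hC.1)
  rw [Finset.card_erase_of_mem hx] at *
  omega

lemma rank_insert_le (hM : IsMultimatroid cls r) {S C : Finset U}
    (hC : Circuit cls r C) {x : U} (hx : x ∈ C) (hsub : C.erase x ⊆ S)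
    (hxS : x ∉ S) (hst : Subtransversal cls (insert x S)) :
    r (insert x S) ≤ r S := by
  have hun : S ∪ C = insert x S := by
    apply Finset.Subset.antisymm
    · intro z hz
      rcases Finset.mem_union.1 hz with h | h
      · exact Finset.mem_insert_of_mem h
      · by_cases hzx : z = x
        · exact hzx ▸ Finset.mem_insert_self _ _
        · exact Finset.mem_insert_of_mem (hsub (Finset.mem_erase.2 ⟨hzx, h⟩))
    · intro z hz
      rcases Finset.mem_insert.1 hz with rfl | h
      · exact Finset.mem_union_right _ hx
      · exact Finset.mem_union_left _ h
  have hint : S ∩ C = C.erase x := by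
    apply Finset.Subset.antisymm
    · intro z hz
      have hzS := (Finset.mem_inter.1 hz).1
      have hzC := (Finset.mem_inter.1 hz).2
      exact Finset.mem_erase.2 ⟨fun h => hxS (h ▸ hzS), hzC⟩
    · intro z hz
      exact Finset.mem_inter.2 ⟨hsub hz, Finset.mem_of_mem_erase hz⟩
  have hsm := hM.submod S C (by rw [hun]; exact hst)
  rw [hun, hint, circuit_erase_rank hM hC hx] at hsm
  have h1 := hC.2.1
  have h2 := circuit_nonempty hC
  omega

/-- The key impossibility: two circuits through a skew pair whose leftovers form
a subtransversal. -/
lemma ntc (hM : IsMultimatroid cls r) {C1 C2 : Finset U} (hC1 : Circuit cls r C1)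
    (hC2 : Circuit cls r C2) {x1 x2 : U} (h1 : x1 ∈ C1) (h2 : x2 ∈ C2)
    (hcl : cls x1 = cls x2) (hne : x1 ≠ x2)
    (hS : Subtransversal cls (C1.erase x1 ∪ C2.erase x2)) : False := by
  set S := C1.erase x1 ∪ C2.erase x2 with hSdef
  have hcls : ∀ z ∈ S, cls z ≠ cls x1 := by
    intro z hz hzc
    rcases Finset.mem_union.1 hz with h | h
    · exact (Finset.mem_erase.1 h).1 (hC1.1 (Finset.mem_coe.2 (Finset.mem_of_mem_erase h))
        (Finset.mem_coe.2 h1) hzc)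
    · exact (Finset.mem_erase.1 h).1 (hC2.1 (Finset.mem_coe.2 (Finset.mem_of_mem_erase h))
        (Finset.mem_coe.2 h2) (hzc.trans hcl))
  have hx1S : x1 ∉ S := fun h => hcls x1 h rfl
  have hx2S : x2 ∉ S := fun h => hcls x2 h hcl.symm
  have hr1 : r (insert x1 S) ≤ r S :=
    rank_insert_le hM hC1 h1 Finset.subset_union_left hx1S (subtr_insert hS hcls)
  have hr2 : r (insert x2 S) ≤ r S :=
    rank_insert_le hM hC2 h2 Finset.subset_union_right hx2S
      (subtr_insert hS (fun u hu => (hcl ▸ hcls u hu)))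
  have hR2 := hM.axiomR2 S x1 x2 hS hcl hne hcls
  omega

lemma circuit_extra (hM : IsMultimatroid cls r) {B0 : Finset U} (hB0 : Indep cls r B0)
    {j : ι} {C1 : Finset U} (hC1 : Circuit cls r C1)
    (h1 : C1 ⊆ B0 ∪ skewClass cls j) :
    ∃ x, x ∈ C1 ∧ x ∉ B0 ∧ cls x = j ∧ ∀ z ∈ C1, z ≠ x → z ∈ B0 ∧ cls z ≠ j := by
  have hnot : ¬ C1 ⊆ B0 := by
    intro h
    have := (indep_subset hM hB0 h).2
    have := hC1.2.1
    omega
  obtain ⟨x, hxC, hxB⟩ := Finset.not_subset.1 hnot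
  have hxj : cls x = j := by
    rcases Finset.mem_union.1 (h1 hxC) with h | h
    · exact absurd h hxB
    · exact mem_skewClass.1 h
  refine ⟨x, hxC, hxB, hxj, fun z hz hzx => ?_⟩
  have hzj : cls z ≠ j := by
    intro hc
    exact hzx (hC1.1 (Finset.mem_coe.2 hz) (Finset.mem_coe.2 hxC) (hc.trans hxj.symm))
  refine ⟨?_, hzj⟩
  rcases Finset.mem_union.1 (h1 hz) with h | h
  · exact h
  · exact absurd (mem_skewClass.1 h) hzj

lemma unique_circuit (hM : IsMultimatroid cls r) {B0 : Finset U}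
    (hB0 : Indep cls r B0) {j : ι} {C1 C2 : Finset U}
    (hC1 : Circuit cls r C1) (h1 : C1 ⊆ B0 ∪ skewClass cls j)
    (hC2 : Circuit cls r C2) (h2 : C2 ⊆ B0 ∪ skewClass cls j) : C1 = C2 := by
  obtain ⟨x1, hx1C, hx1B, hx1j, hchar1⟩ := circuit_extra hM hB0 hC1 h1
  obtain ⟨x2, hx2C, hx2B, hx2j, hchar2⟩ := circuit_extra hM hB0 hC2 h2
  by_cases hx : x1 = x2
  · subst hx
    by_contra hne
    by_cases hsub : C1 ⊆ C2
    · exact hC2.2.2 C1 (Finset.ssubset_iff_subset_ne.2 ⟨hsub, hne⟩) hC1.2.1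
    -- C1 ∩ C2 is a proper subset of C1, hence independent
    have hproper : C1 ∩ C2 ⊂ C1 := by
      refine Finset.ssubset_iff_subset_ne.2 ⟨Finset.inter_subset_left, ?_⟩
      intro h
      exact hsub (by rw [← h]; exact Finset.inter_subset_right)
    have hint_indep : r (C1 ∩ C2) = (C1 ∩ C2).card := by
      have := hC1.2.2 _ hproper
      have := hM.rank_le_card (C1 ∩ C2) (subtr_mono Finset.inter_subset_left hC1.1)
      omega
    have hUst : Subtransversal cls (C1 ∪ C2) := by
      intro a ha b hb hab
      simp only [coe_union, Set.mem_union, mem_coe] at ha hb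
      have key : ∀ z, z ∈ C1 ∨ z ∈ C2 → cls z = j → z = x1 := by
        rintro z (hz | hz) hzj
        · by_contra h; exact (hchar1 z hz h).2 hzj
        · by_contra h; exact (hchar2 z hz h).2 hzj
      have keyB : ∀ z, z ∈ C1 ∨ z ∈ C2 → cls z ≠ j → z ∈ B0 := by
        rintro z (hz | hz) hzj
        · exact (hchar1 z hz (fun h => hzj (h ▸ hx1j))).1
        · exact (hchar2 z hz (fun h => hzj (h ▸ hx1j))).1
      by_cases hja : cls a = j
      · rw [key a ha hja, key b hb (hab ▸ hja)]
      · exact hB0.1 (Finset.mem_coe.2 (keyB a ha hja))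
          (Finset.mem_coe.2 (keyB b hb (hab ▸ hja))) hab
    have hsm := hM.submod C1 C2 hUst
    have hDsub : (C1 ∪ C2).erase x1 ⊆ B0 := by
      intro z hz
      obtain ⟨hzx, hzU⟩ := Finset.mem_erase.1 hz
      rcases Finset.mem_union.1 hzU with h | h
      · exact (hchar1 z h hzx).1
      · exact (hchar2 z h hzx).1
    have hDr : r ((C1 ∪ C2).erase x1) = ((C1 ∪ C2).erase x1).card :=
      (indep_subset hM hB0 hDsub).2
    have hDle : r ((C1 ∪ C2).erase x1) ≤ r (C1 ∪ C2) :=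
      hM.mono _ _ hUst (erase_subset _ _)
    have hcard : ((C1 ∪ C2).erase x1).card = (C1 ∪ C2).card - 1 :=
      Finset.card_erase_of_mem (Finset.mem_union_left _ hx1C)
    have hcc := Finset.card_union_add_card_inter C1 C2
    have hc1 := hC1.2.1
    have hc2 := hC2.2.1
    have hpos : 0 < (C1 ∪ C2).card :=
      Finset.card_pos.2 ⟨x1, Finset.mem_union_left _ hx1C⟩
    have hinter_le : (C1 ∩ C2).card ≤ C1.card := Finset.card_le_card Finset.inter_subset_left
    omega
  · have hsubB : C1.erase x1 ∪ C2.erase x2 ⊆ B0 := by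
      intro z hz
      rcases Finset.mem_union.1 hz with h | h
      · exact (hchar1 z (Finset.mem_of_mem_erase h) (Finset.mem_erase.1 h).1).1
      · exact (hchar2 z (Finset.mem_of_mem_erase h) (Finset.mem_erase.1 h).1).1
    exact (ntc hM hC1 hC2 hx1C hx2C (hx1j.trans hx2j.symm) hx
      (subtr_mono hsubB hB0.1)).elim

lemma basis_class (hM : IsMultimatroid cls r) (hnd : Nondegenerate cls)
    {B0 : Finset U} (hB0 : MMBasis cls r B0) (j : ι) : ∃ e ∈ B0, cls e = j := by
  by_contra hcon
  push_neg at hcon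
  obtain ⟨x, hx, y, hy, hxy⟩ := Finset.one_lt_card.1 (hnd j)
  have hxj : cls x = j := mem_skewClass.1 hx
  have hyj : cls y = j := mem_skewClass.1 hy
  have hBj : ∀ u ∈ B0, cls u ≠ cls x := fun u hu => hxj ▸ hcon u hu
  have hR2 := hM.axiomR2 B0 x y hB0.1.1 (hxj.trans hyj.symm) hxy hBj
  have hxB : x ∉ B0 := fun h => hcon x h hxj
  have hyB : y ∉ B0 := fun h => hcon y h hyj
  have hsx : Subtransversal cls (insert x B0) := subtr_insert hB0.1.1 hBj
  have hsy : Subtransversal cls (insert y B0) :=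
    subtr_insert hB0.1.1 (fun u hu => hyj ▸ hcon u hu)
  have hrx : r (insert x B0) ≤ B0.card + 1 := by
    have := hM.rank_le_card _ hsx
    rwa [Finset.card_insert_of_notMem hxB] at this
  have hry : r (insert y B0) ≤ B0.card + 1 := by
    have := hM.rank_le_card _ hsy
    rwa [Finset.card_insert_of_notMem hyB] at this
  have hrB := hB0.1.2
  have hcase : r (insert x B0) = B0.card + 1 ∨ r (insert y B0) = B0.card + 1 := by omega
  rcases hcase with h | h
  · have : insert x B0 = B0 := hB0.2 _ ⟨hsx, by rw [Finset.card_insert_of_notMem hxB]; exact h⟩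
      (Finset.subset_insert _ _)
    exact hxB (this ▸ Finset.mem_insert_self x B0)
  · have : insert y B0 = B0 := hB0.2 _ ⟨hsy, by rw [Finset.card_insert_of_notMem hyB]; exact h⟩
      (Finset.subset_insert _ _)
    exact hyB (this ▸ Finset.mem_insert_self y B0)

lemma lemA (hM : IsMultimatroid cls r) {B0 : Finset U} (hB0 : Indep cls r B0)
    {i : ι} {C0 : Finset U} (hC0 : Circuit cls r C0) (hC0s : C0 ⊆ B0 ∪ skewClass cls i)
    {u : U} (hu : u ∈ C0) (huB : u ∉ B0)
    {e : U} (he : e ∈ B0) (hei : cls e = i)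
    {j : ι} (hji : j ≠ i) {D : Finset U} (hD : Circuit cls r D)
    (hDs : D ⊆ B0 ∪ skewClass cls j) (heD : e ∈ D)
    (hCj : ∀ z ∈ C0, cls z ≠ j) : False := by
  obtain ⟨x, hxD, hxB, hxj, hcharD⟩ := circuit_extra hM hB0 hD hDs
  have hui : cls u = i := by
    rcases Finset.mem_union.1 (hC0s hu) with h | h
    · exact absurd h huB
    · exact mem_skewClass.1 h
  have hue : u ≠ e := fun h => huB (h ▸ he)
  have hchar0 : ∀ z ∈ C0, z ≠ u → z ∈ B0 ∧ cls z ≠ i := by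
    intro z hz hzu
    have hzi : cls z ≠ i := by
      intro hc
      exact hzu (hC0.1 (Finset.mem_coe.2 hz) (Finset.mem_coe.2 hu) (hc.trans hui.symm))
    refine ⟨?_, hzi⟩
    rcases Finset.mem_union.1 (hC0s hz) with h | h
    · exact h
    · exact absurd (mem_skewClass.1 h) hzi
  have hDi : ∀ z ∈ D, z ≠ e → cls z ≠ i := by
    intro z hz hze hc
    exact hze (hD.1 (Finset.mem_coe.2 hz) (Finset.mem_coe.2 heD) (hc.trans hei.symm))
  set S := C0.erase u ∪ D.erase e with hSdef
  have hSj : ∀ z ∈ S, cls z = j → z = x := by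
    intro z hz hzj
    rcases Finset.mem_union.1 hz with h | h
    · exact absurd hzj (hCj z (Finset.mem_of_mem_erase h))
    · exact hD.1 (Finset.mem_coe.2 (Finset.mem_of_mem_erase h)) (Finset.mem_coe.2 hxD)
        (hzj.trans hxj.symm)
  have hSB : ∀ z ∈ S, cls z ≠ j → z ∈ B0 := by
    intro z hz hzj
    rcases Finset.mem_union.1 hz with h | h
    · exact (hchar0 z (Finset.mem_of_mem_erase h) (Finset.mem_erase.1 h).1).1
    · refine (hcharD z (Finset.mem_of_mem_erase h) ?_).1
      intro hzx; exact hzj (hzx ▸ hxj)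
  refine ntc hM hC0 hD hu heD (hui.trans hei.symm) hue ?_
  intro a ha b hb hab
  rw [Finset.mem_coe] at ha hb
  by_cases hja : cls a = j
  · rw [hSj a ha hja, hSj b hb (hab ▸ hja)]
  · exact hB0.1 (Finset.mem_coe.2 (hSB a ha hja)) (Finset.mem_coe.2 (hSB b hb (hab ▸ hja))) hab

end Aux

/-- exchanging the element of `B` in an active skew class for another
non-`B̲_ω` element of that class yields a basis with the same fundamental circuit at
`ω`, the same active skew classes, and the same elements `B̲_{ω'}` at active classes.
Here `C` is the fundamental circuit `C(B,ω)` (witnessed as the circuit in `B ∪ ω`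
with `≺`-least element in `ω`), `bω = B_ω`, and `bu = B̲_ω`. -/
theorem stmt_10 [DecidableEq U] [Fintype U] [DecidableEq ι] [Fintype ι] [LinearOrder ι]
    (cls : U → ι) (r : Finset U → ℕ) (hM : IsMultimatroid cls r)
    (hnd : Nondegenerate cls) (B : Finset U) (hB : MMBasis cls r B)
    (i : ι) (C : Finset U) (hC : Circuit cls r C) (hCsub : C ⊆ B ∪ skewClass cls i)
    (hmin : ∃ m ∈ C, cls m = i ∧ ∀ x ∈ C, i ≤ cls x)
    (bω : U) (hbω : bω ∈ B) (hbωi : cls bω = i)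
    (bu : U) (hbuC : bu ∈ C) (hbuB : bu ∉ B)
    (b : U) (hb : cls b = i) (hbne : b ≠ bω) (hbne' : b ≠ bu) :
    MMBasis cls r (symmDiff B ({bω, b} : Finset U)) ∧
    C ⊆ symmDiff B ({bω, b} : Finset U) ∪ skewClass cls i ∧
    (∀ j : ι, Active cls r B j ↔ Active cls r (symmDiff B ({bω, b} : Finset U)) j) ∧
    ∀ j : ι, Active cls r B j →
      ∀ C₁ C₂ : Finset U, Circuit cls r C₁ → C₁ ⊆ B ∪ skewClass cls j →
        Circuit cls r C₂ → C₂ ⊆ symmDiff B ({bω, b} : Finset U) ∪ skewClass cls j →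
          C₁ \ B = C₂ \ symmDiff B ({bω, b} : Finset U) := by
  obtain ⟨mC, hmC, hmCi, hCle⟩ := hmin
  have hbB : b ∉ B := by
    intro h
    exact hbne (hB.1.1 (Finset.mem_coe.2 h) (Finset.mem_coe.2 hbω) (hb.trans hbωi.symm))
  have hB'eq : symmDiff B ({bω, b} : Finset U) = insert b (B.erase bω) := by
    ext z
    simp only [Finset.mem_symmDiff, Finset.mem_insert, Finset.mem_singleton,
      Finset.mem_erase]
    constructor
    · rintro (⟨hzB, hz⟩ | ⟨(rfl | rfl), hz⟩)
      · push_neg at hz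
        exact Or.inr ⟨hz.1, hzB⟩
      · exact absurd hbω hz
      · exact Or.inl rfl
    · rintro (rfl | ⟨hzb, hzB⟩)
      · exact Or.inr ⟨Or.inr rfl, hbB⟩
      · exact Or.inl ⟨hzB, by rintro (rfl | rfl) <;> [exact hzb rfl; exact hbB hzB]⟩
  rw [hB'eq]
  set B' : Finset U := insert b (B.erase bω) with hB'def
  -- basic facts
  have hclsB : ∀ u ∈ B, cls u = i → u = bω := fun u hu hui =>
    hB.1.1 (Finset.mem_coe.2 hu) (Finset.mem_coe.2 hbω) (hui.trans hbωi.symm)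
  have hbui : cls bu = i := by
    rcases Finset.mem_union.1 (hCsub hbuC) with h | h
    · exact absurd h hbuB
    · exact mem_skewClass.1 h
  have hCi : ∀ z ∈ C, cls z = i → z = bu := fun z hz hzi =>
    hC.1 (Finset.mem_coe.2 hz) (Finset.mem_coe.2 hbuC) (hzi.trans hbui.symm)
  have hbωC : bω ∉ C := fun h => hbuB ((hCi bω h hbωi) ▸ hbω)
  have hCB : ∀ z ∈ C, z ≠ bu → z ∈ B ∧ cls z ≠ i := by
    intro z hz hzu
    have hzi : cls z ≠ i := fun hc => hzu (hCi z hz hc)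
    refine ⟨?_, hzi⟩
    rcases Finset.mem_union.1 (hCsub hz) with h | h
    · exact h
    · exact absurd (mem_skewClass.1 h) hzi
  have hSi : ∀ u ∈ B.erase bω, cls u ≠ i := by
    intro u hu hui
    exact (Finset.mem_erase.1 hu).1 (hclsB u (Finset.mem_of_mem_erase hu) hui)
  have hB'st : Subtransversal cls B' := by
    refine subtr_insert (subtr_mono (Finset.erase_subset _ _) hB.1.1) ?_
    intro u hu
    rw [hb]; exact hSi u hu
  have hbS : b ∉ B.erase bω := fun h => hbB (Finset.mem_of_mem_erase h)
  have hbuS : bu ∉ B.erase bω := fun h => hbuB (Finset.mem_of_mem_erase h)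
  -- independence of B'
  have hSindep : Indep cls r (B.erase bω) := indep_subset hM hB.1 (Finset.erase_subset _ _)
  have hCeraseSub : C.erase bu ⊆ B.erase bω := by
    intro z hz
    obtain ⟨hzu, hzC⟩ := Finset.mem_erase.1 hz
    exact Finset.mem_erase.2 ⟨fun h => hbωC (h ▸ hzC), (hCB z hzC hzu).1⟩
  have hr1 : r (insert bu (B.erase bω)) ≤ r (B.erase bω) := by
    refine rank_insert_le hM hC hbuC hCeraseSub hbuS ?_
    refine subtr_insert hSindep.1 ?_
    intro u hu; rw [hbui]; exact hSi u hu
  have hR2 := hM.axiomR2 (B.erase bω) bu b hSindep.1 (hbui.trans hb.symm)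
    (Ne.symm hbne') (by intro u hu; rw [hbui]; exact hSi u hu)
  have hrb : r B' ≤ B'.card := hM.rank_le_card _ hB'st
  have hcardB' : B'.card = (B.erase bω).card + 1 := Finset.card_insert_of_notMem hbS
  have hB'indep : Indep cls r B' := by
    refine ⟨hB'st, ?_⟩
    have := hSindep.2
    have : r B' = B'.card := by
      have hh := hSindep.2
      rw [hB'def] at *
      omega
    exact this
  -- B is a transversal; hence so is B'
  have hB'cls : ∀ j : ι, ∃ e ∈ B', cls e = j := by
    intro j
    obtain ⟨e, heB, hej⟩ := basis_class hM hnd hB j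
    by_cases he : e = bω
    · exact ⟨b, Finset.mem_insert_self _ _, by rw [hb, ← hbωi, ← he, hej]⟩
    · exact ⟨e, Finset.mem_insert_of_mem (Finset.mem_erase.2 ⟨he, heB⟩), hej⟩
  have hB'basis : MMBasis cls r B' := by
    refine ⟨hB'indep, ?_⟩
    intro S hS hsub
    refine Finset.Subset.antisymm ?_ hsub
    intro z hz
    obtain ⟨e, heB', hez⟩ := hB'cls (cls z)
    have : z = e := hS.1 (Finset.mem_coe.2 hz) (Finset.mem_coe.2 (hsub heB')) hez.symm
    exact this ▸ heB'
  -- C ⊆ B' ∪ skewClass i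
  have hCsubB' : C ⊆ B' ∪ skewClass cls i := by
    intro z hz
    by_cases hzi : cls z = i
    · exact Finset.mem_union_right _ (mem_skewClass.2 hzi)
    · have hzB : z ∈ B := by
        rcases Finset.mem_union.1 (hCsub hz) with h | h
        · exact h
        · exact absurd (mem_skewClass.1 h) hzi
      exact Finset.mem_union_left _ (Finset.mem_insert_of_mem
        (Finset.mem_erase.2 ⟨fun h => hzi (h ▸ hbωi), hzB⟩))
  have hBerase_sub : B.erase bω ⊆ B' := Finset.subset_insert _ _
  have hbuB' : bu ∉ B' := by
    intro h
    rcases Finset.mem_insert.1 h with h | h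
    · exact hbne' h.symm
    · exact hbuB (Finset.mem_of_mem_erase h)
  -- Active i holds on both sides
  have hActBi : Active cls r B i := by
    refine ⟨C, hC, ?_, mC, hmC, hmCi, hCle⟩
    intro z hz
    obtain ⟨hzC, hzs⟩ := Finset.mem_sdiff.1 hz
    rcases Finset.mem_union.1 (hCsub hzC) with h | h
    · exact h
    · exact absurd h hzs
  have hActB'i : Active cls r B' i := by
    refine ⟨C, hC, ?_, mC, hmC, hmCi, hCle⟩
    intro z hz
    obtain ⟨hzC, hzs⟩ := Finset.mem_sdiff.1 hz
    rcases Finset.mem_union.1 (hCsubB' hzC) with h | h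
    · exact h
    · exact absurd h hzs
  refine ⟨hB'basis, hCsubB', ?_, ?_⟩
  · -- activities coincide
    intro j
    by_cases hji : j = i
    · subst hji; exact iff_of_true hActBi hActB'i
    constructor
    · rintro ⟨D, hD, hDsub, m, hm, hmj, hmle⟩
      have hDB : D ⊆ B ∪ skewClass cls j := by
        intro z hz
        by_cases hzj : cls z = j
        · exact Finset.mem_union_right _ (mem_skewClass.2 hzj)
        · exact Finset.mem_union_left _ (hDsub (Finset.mem_sdiff.2
            ⟨hz, fun h => hzj (mem_skewClass.1 h)⟩))
      have hbωD : bω ∉ D := by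
        intro hin
        have hjlt : j < i := lt_of_le_of_ne (hbωi ▸ hmle bω hin) hji
        refine lemA hM hB.1 hC hCsub hbuC hbuB hbω hbωi hji hD hDB hin ?_
        intro z hz hzj
        exact absurd (hzj ▸ hCle z hz) (not_le.2 hjlt)
      refine ⟨D, hD, ?_, m, hm, hmj, hmle⟩
      intro z hz
      have hzB : z ∈ B := hDsub hz
      have hzω : z ≠ bω := fun h => hbωD (h ▸ (Finset.mem_sdiff.1 hz).1)
      exact hBerase_sub (Finset.mem_erase.2 ⟨hzω, hzB⟩)
    · rintro ⟨D, hD, hDsub, m, hm, hmj, hmle⟩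
      have hDB' : D ⊆ B' ∪ skewClass cls j := by
        intro z hz
        by_cases hzj : cls z = j
        · exact Finset.mem_union_right _ (mem_skewClass.2 hzj)
        · exact Finset.mem_union_left _ (hDsub (Finset.mem_sdiff.2
            ⟨hz, fun h => hzj (mem_skewClass.1 h)⟩))
      have hbD : b ∉ D := by
        intro hin
        have hjlt : j < i := lt_of_le_of_ne (hb ▸ hmle b hin) hji
        refine lemA hM hB'indep hC hCsubB' hbuC hbuB' (Finset.mem_insert_self _ _)
          hb hji hD hDB' hin ?_
        intro z hz hzj
        exact absurd (hzj ▸ hCle z hz) (not_le.2 hjlt)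
      refine ⟨D, hD, ?_, m, hm, hmj, hmle⟩
      intro z hz
      have hzB' : z ∈ B' := hDsub hz
      rcases Finset.mem_insert.1 hzB' with h | h
      · exact absurd (h ▸ (Finset.mem_sdiff.1 hz).1) hbD
      · exact Finset.mem_of_mem_erase h
  · -- fundamental circuits agree on active classes
    intro j hact C₁ C₂ hC₁ hC₁s hC₂ hC₂s
    by_cases hji : j = i
    · subst hji
      have e1 : C₁ = C := unique_circuit hM hB.1 hC₁ hC₁s hC hCsub
      have e2 : C₂ = C := unique_circuit hM hB'indep hC₂ hC₂s hC hCsubB'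
      subst e1; subst e2
      ext z
      simp only [Finset.mem_sdiff]
      constructor
      · rintro ⟨hz, hzB⟩
        refine ⟨hz, ?_⟩
        have : z = bu := by
          by_contra h
          exact hzB (hCB z hz h).1
        exact this ▸ hbuB'
      · rintro ⟨hz, hzB'⟩
        refine ⟨hz, fun hzB => ?_⟩
        exact hzB' (hBerase_sub (Finset.mem_erase.2 ⟨fun h => hbωC (h ▸ hz), hzB⟩))
    · obtain ⟨D, hD, hDsub, m, hm, hmj, hmle⟩ := hact
      have hDB : D ⊆ B ∪ skewClass cls j := by
        intro z hz
        by_cases hzj : cls z = j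
        · exact Finset.mem_union_right _ (mem_skewClass.2 hzj)
        · exact Finset.mem_union_left _ (hDsub (Finset.mem_sdiff.2
            ⟨hz, fun h => hzj (mem_skewClass.1 h)⟩))
      have hbωD : bω ∉ D := by
        intro hin
        have hjlt : j < i := lt_of_le_of_ne (hbωi ▸ hmle bω hin) hji
        refine lemA hM hB.1 hC hCsub hbuC hbuB hbω hbωi hji hD hDB hin ?_
        intro z hz hzj
        exact absurd (hzj ▸ hCle z hz) (not_le.2 hjlt)
      have hDB' : D ⊆ B' ∪ skewClass cls j := by
        intro z hz
        rcases Finset.mem_union.1 (hDB hz) with h | h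
        · exact Finset.mem_union_left _ (hBerase_sub (Finset.mem_erase.2
            ⟨fun hh => hbωD (hh ▸ hz), h⟩))
        · exact Finset.mem_union_right _ h
      have hbD : b ∉ D := by
        intro hin
        rcases Finset.mem_union.1 (hDB hin) with h | h
        · exact hbB h
        · exact hji ((mem_skewClass.1 h) ▸ hb ▸ rfl : i = j).symm
      have e1 : C₁ = D := unique_circuit hM hB.1 hC₁ hC₁s hD hDB
      have e2 : C₂ = D := unique_circuit hM hB'indep hC₂ hC₂s hD hDB'
      subst e1; subst e2
      ext z
      simp only [Finset.mem_sdiff]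
      constructor
      · rintro ⟨hz, hzB⟩
        refine ⟨hz, fun hzB' => ?_⟩
        rcases Finset.mem_insert.1 hzB' with h | h
        · exact hbD (h ▸ hz)
        · exact hzB (Finset.mem_of_mem_erase h)
      · rintro ⟨hz, hzB'⟩
        refine ⟨hz, fun hzB => ?_⟩
        exact hzB' (hBerase_sub (Finset.mem_erase.2 ⟨fun h => hbωD (h ▸ hz), hzB⟩))
end

section
/- Let Z be a non-degenerate multimatroid with total order ≺ on its skew classes, and let B, B' be bases such that act_≺(B) = act_≺(B') and B_ω = B'_ω for every inactive skew class ω. Then for each active skew class ω, B̲_ω = B̲'_ω (i.e., the fundamental circuits C(B,ω) and C(B',ω) meet ω − B in the same element). -/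
open Finset

variable {U ι : Type}

section Aux
variable [DecidableEq U] [Fintype U] [DecidableEq ι] [Fintype ι]
variable {cls : U → ι} {r : Finset U → ℕ}
set_option linter.unusedSectionVars false

lemma st_mono {S T : Finset U} (h : S ⊆ T) (hT : Subtransversal cls T) :
    Subtransversal cls S :=
  hT.mono (by exact_mod_cast h)

lemma st_insert {S : Finset U} {a : U} (hS : Subtransversal cls S)
    (ha : ∀ x ∈ S, cls x ≠ cls a) : Subtransversal cls (insert a S) := by
  intro x hx y hy hxy
  simp only [coe_insert, Set.mem_insert_iff, mem_coe] at hx hy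
  rcases hx with rfl | hx <;> rcases hy with rfl | hy
  · rfl
  · exact absurd hxy.symm (ha _ hy)
  · exact absurd hxy (ha _ hx)
  · exact hS hx hy hxy

lemma rank_insert_le_s11 (hM : IsMultimatroid cls r) {S : Finset U} {a : U}
    (h : Subtransversal cls (insert a S)) : r (insert a S) ≤ r S + 1 := by
  by_cases haS : a ∈ S
  · rw [insert_eq_self.2 haS]; omega
  · have hsub := hM.submod S {a} (by rwa [union_comm, ← insert_eq])
    have h1 : r ({a} : Finset U) ≤ 1 := by
      have := hM.rank_le_card {a} (st_mono (by simp [subset_insert]) h)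
      simpa using this
    rw [union_comm, ← insert_eq] at hsub
    omega

lemma rank_union_le (hM : IsMultimatroid cls r) (S : Finset U) (T : Finset U)
    (h : Subtransversal cls (S ∪ T)) : r (S ∪ T) ≤ r S + T.card := by
  classical
  induction T using Finset.induction_on with
  | empty => simp
  | @insert a T haT ih =>
      have hST : S ∪ insert a T = insert a (S ∪ T) := by
        ext x; simp [or_comm, or_assoc, or_left_comm]
      rw [hST] at h ⊢
      have hsub : Subtransversal cls (S ∪ T) := st_mono (subset_insert _ _) h
      have := rank_insert_le_s11 hM h
      have := ih hsub
      rw [card_insert_of_notMem haT]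
      omega

lemma subset_indep (hM : IsMultimatroid cls r) {S T : Finset U} (hST : S ⊆ T)
    (hT : Subtransversal cls T) (hTr : r T = T.card) : r S = S.card := by
  have h1 : r (S ∪ (T \ S)) ≤ r S + (T \ S).card :=
    rank_union_le hM _ _ (by rwa [union_sdiff_of_subset hST])
  rw [union_sdiff_of_subset hST, card_sdiff_of_subset hST] at h1
  have h2 : r S ≤ S.card := hM.rank_le_card S (st_mono hST hT)
  have h3 : S.card ≤ T.card := card_le_card hST
  omega

lemma two_dep (hM : IsMultimatroid cls r) {I : Finset U} {x y : U}
    (hI : Subtransversal cls I) (hxy : cls x = cls y) (hne : x ≠ y)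
    (hcl : ∀ u ∈ I, cls u ≠ cls x)
    (hx : r (insert x I) ≤ r I) (hy : r (insert y I) ≤ r I) : False := by
  have := hM.axiomR2 I x y hI hxy hne hcl
  omega

lemma absorb (hM : IsMultimatroid cls r) {I J : Finset U} {u : U} (hIJ : I ⊆ J)
    (hJ : Subtransversal cls (insert u J)) (hu : u ∉ J)
    (h : r (insert u I) ≤ r I) : r (insert u J) ≤ r J := by
  have hUn : J ∪ insert u I = insert u J := by
    ext x
    simp only [mem_union, mem_insert]
    constructor
    · rintro (hx | rfl | hx)
      · exact Or.inr hx
      · exact Or.inl rfl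
      · exact Or.inr (hIJ hx)
    · rintro (rfl | hx)
      · exact Or.inr (Or.inl rfl)
      · exact Or.inl hx
  have hInt : J ∩ insert u I = I := by
    ext x
    simp only [mem_inter, mem_insert]
    constructor
    · rintro ⟨hxJ, rfl | hxI⟩
      · exact absurd hxJ hu
      · exact hxI
    · intro hx; exact ⟨hIJ hx, Or.inr hx⟩
  have hsub := hM.submod J (insert u I) (by rwa [hUn])
  rw [hUn, hInt] at hsub
  omega

lemma basis_transversal (hM : IsMultimatroid cls r) (hnd : Nondegenerate cls)
    {B : Finset U} (hB : MMBasis cls r B) : ∀ i : ι, ∃ b ∈ B, cls b = i := by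
  intro i
  by_contra hno
  push_neg at hno
  obtain ⟨x, hx, y, hy, hxy⟩ := Finset.one_lt_card.1 (lt_of_lt_of_le one_lt_two (hnd i))
  simp only [skewClass, mem_filter, mem_univ, true_and] at hx hy
  have hclB : ∀ a : U, cls a = i → ∀ u ∈ B, cls u ≠ cls a := by
    intro a ha u hu; rw [ha]; exact fun h => hno u hu h
  have hdep : ∀ a : U, cls a = i → r (insert a B) ≤ r B := by
    intro a ha
    have hsub : Subtransversal cls (insert a B) := st_insert hB.1.1 (hclB a ha)
    have haB : a ∉ B := fun h => hno a h ha
    have hne : ¬ Indep cls r (insert a B) := by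
      intro hind
      have := hB.2 _ hind (subset_insert _ _)
      exact haB (this ▸ mem_insert_self a B)
    have hcard : r (insert a B) ≤ B.card + 1 := by
      have := hM.rank_le_card _ hsub
      rwa [card_insert_of_notMem haB] at this
    have : r (insert a B) ≠ (insert a B).card := fun h => hne ⟨hsub, h⟩
    rw [card_insert_of_notMem haB] at this
    rw [hB.1.2]
    omega
  exact two_dep hM hB.1.1 (hx.trans hy.symm) hxy (hclB x hx) (hdep x hx) (hdep y hy)

lemma rank_insert_le_of_dep (hM : IsMultimatroid cls r) {I : Finset U} {x : U}
    (hsub : Subtransversal cls (insert x I)) (hIr : r I = I.card) (hx : x ∉ I)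
    {C : Finset U} (hC : Circuit cls r C) (hCI : C ⊆ insert x I) :
    r (insert x I) ≤ r I := by
  by_contra h
  push_neg at h
  have h1 : r (insert x I) ≤ (insert x I).card := hM.rank_le_card _ hsub
  rw [card_insert_of_notMem hx] at h1
  have h2 : r (insert x I) = (insert x I).card := by
    rw [card_insert_of_notMem hx]; omega
  have := subset_indep hM hCI hsub h2
  exact absurd hC.2.1 (by omega)

lemma active_elt (hM : IsMultimatroid cls r) {B : Finset U} {i : ι}
    [LinearOrder ι]
    (hB : MMBasis cls r B) (h : ∃ C, Circuit cls r C ∧ C \ skewClass cls i ⊆ B ∧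
      ∃ m ∈ C, cls m = i ∧ ∀ x ∈ C, i ≤ cls x) :
    ∃ u, cls u = i ∧ u ∉ B ∧
      r (insert u (B.filter (fun b => i < cls b))) ≤ r (B.filter (fun b => i < cls b)) := by
  obtain ⟨C, hC, hCB, m, hmC, hmi, hmin⟩ := h
  have hCmem : ∀ x ∈ C, cls x ≠ i → x ∈ B := by
    intro x hx hxi
    exact hCB (by simp [mem_sdiff, hx, skewClass, hxi])
  have hCm : ∀ x ∈ C, cls x = i → x = m := by
    intro x hx hxi
    exact hC.1 (mem_coe.2 hx) (mem_coe.2 hmC) (hxi.trans hmi.symm)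
  have hIk : r (B.filter (fun b => i < cls b)) = (B.filter (fun b => i < cls b)).card :=
    subset_indep hM (filter_subset _ _) hB.1.1 hB.1.2
  have hmB : m ∉ B := by
    intro hmB
    have hCsB : C ⊆ B := by
      intro x hx
      by_cases hxi : cls x = i
      · rw [hCm x hx hxi]; exact hmB
      · exact hCmem x hx hxi
    have := subset_indep hM hCsB hB.1.1 hB.1.2
    exact absurd hC.2.1 (by omega)
  refine ⟨m, hmi, hmB, ?_⟩
  have hmI : m ∉ B.filter (fun b => i < cls b) := by
    simp [mem_filter, hmB]
  have hsub : Subtransversal cls (insert m (B.filter (fun b => i < cls b))) := by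
    apply st_insert (st_mono (filter_subset _ _) hB.1.1)
    intro x hx
    simp only [mem_filter] at hx
    rw [hmi]; exact ne_of_gt hx.2
  have hCsub : C ⊆ insert m (B.filter (fun b => i < cls b)) := by
    intro x hx
    by_cases hxi : cls x = i
    · rw [hCm x hx hxi]; exact mem_insert_self _ _
    · refine mem_insert_of_mem ?_
      simp only [mem_filter]
      exact ⟨hCmem x hx hxi, lt_of_le_of_ne (hmin x hx) (Ne.symm hxi)⟩
  exact rank_insert_le_of_dep hM hsub hIk hmI hC hCsub

end Aux

section Order2
set_option linter.unusedSectionVars false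
variable [DecidableEq U] [Fintype U] [DecidableEq ι] [Fintype ι] [LinearOrder ι]
variable {cls : U → ι} {r : Finset U → ℕ}

lemma st_union {S T : Finset U} (hS : Subtransversal cls S) (hT : Subtransversal cls T)
    (h : ∀ x ∈ S, ∀ y ∈ T, cls x ≠ cls y) : Subtransversal cls (S ∪ T) := by
  intro x hx y hy hxy
  simp only [coe_union, Set.mem_union, mem_coe] at hx hy
  rcases hx with hx | hx <;> rcases hy with hy | hy
  · exact hS hx hy hxy
  · exact absurd hxy (h x hx y hy)
  · exact absurd hxy.symm (h y hy x hx)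
  · exact hT hx hy hxy

lemma key (hM : IsMultimatroid cls r) (hnd : Nondegenerate cls) {B B' : Finset U}
    (hB : MMBasis cls r B) (hB' : MMBasis cls r B')
    (hact : ∀ j : ι, Active cls r B j ↔ Active cls r B' j)
    (hagree : ∀ x : U, ¬ Active cls r B (cls x) → (x ∈ B ↔ x ∈ B')) :
    ∀ (n : ℕ) (j : ι), (univ.filter (fun i => j < i)).card ≤ n →
      ∀ X : Finset U, Subtransversal cls X → (∀ x ∈ X, cls x ≤ j) →
      r (B.filter (fun b => j < cls b) ∪ X) = r (B'.filter (fun b => j < cls b) ∪ X) := by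
  have hempty : ∀ (j : ι), univ.filter (fun i => j < i) = ∅ →
      ∀ (BB : Finset U), BB.filter (fun b => j < cls b) = ∅ := by
    intro j hj BB
    refine filter_eq_empty_iff.2 (fun {b} _ hb => ?_)
    have : cls b ∈ univ.filter (fun i => j < i) := by simp [hb]
    rw [hj] at this
    exact absurd this (notMem_empty _)
  intro n
  induction n with
  | zero =>
      intro j hcard X hX hXj
      have h0 := card_eq_zero.1 (Nat.le_zero.1 hcard)
      rw [hempty j h0 B, hempty j h0 B']
  | succ n ih =>
      intro j hcard X hX hXj
      by_cases hne : (univ.filter (fun i => j < i)).Nonempty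
      swap
      · have h0 := not_nonempty_iff_eq_empty.1 hne
        rw [hempty j h0 B, hempty j h0 B']
      set k := (univ.filter (fun i => j < i)).min' hne with hkdef
      have hjk : j < k := (mem_filter.1 (min'_mem _ hne)).2
      have hkmin : ∀ i, j < i → k ≤ i := fun i hi => min'_le _ _ (by simp [hi])
      have hcardk : (univ.filter (fun i => k < i)).card ≤ n := by
        have hss : univ.filter (fun i => k < i) ⊂ univ.filter (fun i => j < i) := by
          constructor
          · intro i hi
            simp only [mem_filter, mem_univ, true_and] at hi ⊢
            exact lt_trans hjk hi
          · intro hsub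
            have hk2 : k ∈ univ.filter (fun i => j < i) := by simp [hjk]
            have := hsub hk2
            simp at this
        have := card_lt_card hss
        omega
      obtain ⟨bk, hbkB, hbk⟩ := basis_transversal hM hnd hB k
      obtain ⟨bk', hbkB', hbk'⟩ := basis_transversal hM hnd hB' k
      have hdec : ∀ (BB : Finset U), Subtransversal cls BB → ∀ b ∈ BB, cls b = k →
          BB.filter (fun b => j < cls b) = insert b (BB.filter (fun b => k < cls b)) := by
        intro BB hBB b hbBB hbcls
        ext a
        simp only [mem_filter, mem_insert]
        constructor
        · rintro ⟨haB, hja⟩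
          rcases lt_or_eq_of_le (hkmin _ hja) with h | h
          · right; exact ⟨haB, h⟩
          · left; exact hBB (mem_coe.2 haB) (mem_coe.2 hbBB) (by rw [← h, hbcls])
        · rintro (rfl | ⟨haB, hka⟩)
          · exact ⟨hbBB, by rw [hbcls]; exact hjk⟩
          · exact ⟨haB, lt_trans hjk hka⟩
      rw [hdec B hB.1.1 bk hbkB hbk, hdec B' hB'.1.1 bk' hbkB' hbk',
        insert_union, ← union_insert, insert_union, ← union_insert]
      have hXk : ∀ b : U, cls b = k → Subtransversal cls (insert b X) := by
        intro b hb
        refine st_insert hX (fun x hx => ?_)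
        rw [hb]
        exact ne_of_lt (lt_of_le_of_lt (hXj x hx) hjk)
      have hXkle : ∀ b : U, cls b = k → ∀ x ∈ insert b X, cls x ≤ k := by
        intro b hb x hx
        rcases mem_insert.1 hx with rfl | hx
        · exact le_of_eq hb
        · exact le_of_lt (lt_of_le_of_lt (hXj x hx) hjk)
      have step1 := ih k hcardk (insert bk X) (hXk bk hbk) (hXkle bk hbk)
      rw [step1]
      by_cases hbb : bk = bk'
      · rw [hbb]
      · have hactk : Active cls r B k := by
          by_contra hna
          have hmem := (hagree bk (by rwa [hbk])).1 hbkB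
          exact hbb (hB'.1.1 (mem_coe.2 hmem) (mem_coe.2 hbkB') (hbk.trans hbk'.symm))
        have hactk' := (hact k).1 hactk
        obtain ⟨u, hu, huB, hur⟩ := active_elt hM hB hactk
        obtain ⟨u', hu', huB', hur'⟩ := active_elt hM hB' hactk'
        set IK := B.filter (fun b => k < cls b) with hIKdef
        set IK' := B'.filter (fun b => k < cls b) with hIK'def
        have hIK'sub : Subtransversal cls IK' := st_mono (filter_subset _ _) hB'.1.1
        have hIK'cls : ∀ v ∈ IK', k < cls v := fun v hv => (mem_filter.1 hv).2
        have hX0 := ih k hcardk ∅ (fun x hx => absurd hx (by simp)) (by simp)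
        rw [union_empty, union_empty] at hX0
        have hXu := ih k hcardk {u} (fun x hx y hy hxy => by
            simp only [coe_singleton, Set.mem_singleton_iff] at hx hy
            rw [hx, hy]) (by simp [hu])
        rw [union_comm IK {u}, ← insert_eq, union_comm IK' {u}, ← insert_eq] at hXu
        have hurIK' : r (insert u IK') ≤ r IK' := by rw [← hXu, ← hX0]; exact hur
        have huu' : u = u' := by
          by_contra hne2
          exact two_dep hM hIK'sub (hu.trans hu'.symm) hne2
            (fun v hv => by rw [hu]; exact ne_of_gt (hIK'cls v hv)) hurIK' hur'
        have hJsub : Subtransversal cls (IK' ∪ X) := by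
          refine st_union hIK'sub hX (fun x hx y hy => ?_)
          exact ne_of_gt (lt_of_le_of_lt (le_trans (hXj y hy) (le_of_lt hjk)) (hIK'cls x hx))
        have hJk : ∀ v ∈ IK' ∪ X, cls v ≠ k := by
          intro v hv
          rcases mem_union.1 hv with hv | hv
          · exact ne_of_gt (hIK'cls v hv)
          · exact ne_of_lt (lt_of_le_of_lt (hXj v hv) hjk)
        have huJ : u ∉ IK' ∪ X := fun h => hJk u h hu
        have hJusub : Subtransversal cls (insert u (IK' ∪ X)) :=
          st_insert hJsub (fun x hx => by rw [hu]; exact hJk x hx)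
        have habs : r (insert u (IK' ∪ X)) ≤ r (IK' ∪ X) :=
          absorb hM subset_union_left hJusub huJ hurIK'
        have hR2x := hM.axiomR2 (IK' ∪ X) bk u hJsub (by rw [hbk, hu])
          (fun h => huB (h ▸ hbkB)) (fun v hv => by rw [hbk]; exact hJk v hv)
        have hR2x' := hM.axiomR2 (IK' ∪ X) bk' u hJsub (by rw [hbk', hu])
          (fun h => by rw [← huu'] at huB'; exact huB' (h ▸ hbkB'))
          (fun v hv => by rw [hbk']; exact hJk v hv)
        have h1 : r (insert bk (IK' ∪ X)) ≤ r (IK' ∪ X) + 1 :=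
          rank_insert_le_s11 hM (st_insert hJsub (fun x hx => by rw [hbk]; exact hJk x hx))
        have h1' : r (insert bk' (IK' ∪ X)) ≤ r (IK' ∪ X) + 1 :=
          rank_insert_le_s11 hM (st_insert hJsub (fun x hx => by rw [hbk']; exact hJk x hx))
        rw [union_insert, union_insert]
        omega

end Order2

/-- two bases with the same active skew classes, agreeing on all
inactive skew classes, have the same elements `B̲_ω` at each active skew class:
their fundamental circuits at `ω` meet the complement of the basis in the same
element. -/
theorem stmt_11 [DecidableEq U] [Fintype U] [DecidableEq ι] [Fintype ι] [LinearOrder ι]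
    (cls : U → ι) (r : Finset U → ℕ) (hM : IsMultimatroid cls r)
    (hnd : Nondegenerate cls) (B B' : Finset U)
    (hB : MMBasis cls r B) (hB' : MMBasis cls r B')
    (hact : ∀ j : ι, Active cls r B j ↔ Active cls r B' j)
    (hagree : ∀ x : U, ¬ Active cls r B (cls x) → (x ∈ B ↔ x ∈ B')) :
    ∀ j : ι, Active cls r B j →
      ∀ C C' : Finset U, Circuit cls r C → C ⊆ B ∪ skewClass cls j →
        Circuit cls r C' → C' ⊆ B' ∪ skewClass cls j → C \ B = C' \ B' := by
  intro j hactj C C' hC hCB hC' hCB'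
  obtain ⟨u, hu, huB, hur⟩ := active_elt hM hB hactj
  obtain ⟨u', hu', huB', hur'⟩ := active_elt hM hB' ((hact j).1 hactj)
  have hX0 := key hM hnd hB hB' hact hagree ((univ.filter (fun i => j < i)).card) j
    le_rfl ∅ (fun x hx => absurd hx (by simp)) (by simp)
  rw [union_empty, union_empty] at hX0
  have hXu := key hM hnd hB hB' hact hagree ((univ.filter (fun i => j < i)).card) j
    le_rfl {u} (fun x hx y hy hxy => by
      simp only [coe_singleton, Set.mem_singleton_iff] at hx hy
      rw [hx, hy]) (by simp [hu])
  rw [union_comm _ {u}, ← insert_eq, union_comm _ {u}, ← insert_eq] at hXu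
  have hurIJ' : r (insert u (B'.filter (fun b => j < cls b))) ≤
      r (B'.filter (fun b => j < cls b)) := by rw [← hXu, ← hX0]; exact hur
  have huu' : u = u' := by
    by_contra hne2
    refine two_dep hM (st_mono (filter_subset _ _) hB'.1.1) (hu.trans hu'.symm) hne2
      (fun v hv => by rw [hu]; exact ne_of_gt (mem_filter.1 hv).2) hurIJ' hur'
  have main : ∀ (BB : Finset U), MMBasis cls r BB → ∀ v : U, cls v = j → v ∉ BB →
      r (insert v (BB.filter (fun b => j < cls b))) ≤ r (BB.filter (fun b => j < cls b)) →
      ∀ D : Finset U, Circuit cls r D → D ⊆ BB ∪ skewClass cls j → D \ BB = {v} := by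
    intro BB hBB v hv hvB hvr D hD hDB
    set IF := BB.filter (fun b => cls b ≠ j) with hIF
    have hIFsub : Subtransversal cls IF := st_mono (filter_subset _ _) hBB.1.1
    have hIFr : r IF = IF.card := subset_indep hM (filter_subset _ _) hBB.1.1 hBB.1.2
    have hIFcls : ∀ x ∈ IF, cls x ≠ j := fun x hx => (mem_filter.1 hx).2
    have hDne : (D \ BB).Nonempty := by
      rw [sdiff_nonempty]
      intro hsub
      have := subset_indep hM hsub hBB.1.1 hBB.1.2
      exact absurd hD.2.1 (by omega)
    obtain ⟨x, hx⟩ := hDne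
    have hxD : x ∈ D := (mem_sdiff.1 hx).1
    have hxB : x ∉ BB := (mem_sdiff.1 hx).2
    have hclsj : ∀ y ∈ D, y ∉ BB → cls y = j := by
      intro y hyD hyB
      rcases mem_union.1 (hDB hyD) with h | h
      · exact absurd h hyB
      · simpa [skewClass] using h
    have hxj : cls x = j := hclsj x hxD hxB
    have hDBx : D \ BB = {x} := by
      ext y
      simp only [mem_sdiff, mem_singleton]
      constructor
      · rintro ⟨hyD, hyB⟩
        exact hD.1 (mem_coe.2 hyD) (mem_coe.2 hxD) ((hclsj y hyD hyB).trans hxj.symm)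
      · rintro rfl; exact ⟨hxD, hxB⟩
    have hDsub : D ⊆ insert x IF := by
      intro y hy
      by_cases hyx : y = x
      · rw [hyx]; exact mem_insert_self _ _
      · have hyB : y ∈ BB := by
          by_contra hyB
          have : y ∈ D \ BB := mem_sdiff.2 ⟨hy, hyB⟩
          rw [hDBx] at this
          exact hyx (mem_singleton.1 this)
        refine mem_insert_of_mem (mem_filter.2 ⟨hyB, ?_⟩)
        intro hyj
        exact hyx (hD.1 (mem_coe.2 hy) (mem_coe.2 hxD) (hyj.trans hxj.symm))
    have hxIF : x ∉ IF := fun h => hxB (mem_filter.1 h).1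
    have hIFxsub : Subtransversal cls (insert x IF) :=
      st_insert hIFsub (fun y hy => by rw [hxj]; exact hIFcls y hy)
    have hdepx : r (insert x IF) ≤ r IF :=
      rank_insert_le_of_dep hM hIFxsub hIFr hxIF hD hDsub
    have hsubIJ : BB.filter (fun b => j < cls b) ⊆ IF := by
      intro b hb
      simp only [mem_filter, hIF] at hb ⊢
      exact ⟨hb.1, ne_of_gt hb.2⟩
    have hvIF : v ∉ IF := fun h => hvB (mem_filter.1 h).1
    have hIFvsub : Subtransversal cls (insert v IF) :=
      st_insert hIFsub (fun y hy => by rw [hv]; exact hIFcls y hy)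
    have hdepv : r (insert v IF) ≤ r IF := absorb hM hsubIJ hIFvsub hvIF hvr
    have hxv : x = v := by
      by_contra hne2
      exact two_dep hM hIFsub (hxj.trans hv.symm) hne2
        (fun y hy => by rw [hxj]; exact hIFcls y hy) hdepx hdepv
    rw [hDBx, hxv]
  have e1 := main B hB u hu huB hur C hC hCB
  have e2 := main B' hB' u' hu' huB' hur' C' hC' hCB'
  rw [e1, e2, huu']
end
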